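/- Let d ≥ 1, η > 0, L ≥ 0, and take the scaling a = d. Let Q ⊆ ℝ^{d+1} be nonempty and closed, z ∈ ℝ^{d+1} with last coordinate z_{d+1} = s − dη for some s ∈ ℝ, let w* ∈ Q be the metric projection of z onto Q, and let w̃ ∈ ℝ^{d+1} satisfy ‖w̃ − w*‖ ≤ (1 + L/d)·√(2η/(d+1)). Define δ₀ = (1 + L/d)·√(2η/(d+1)), P₁(w) = (‖w − w̃‖² + ‖w̃ − z‖²)/(2η) − (√2·(L+d)/(d·√(η(d+1))))·(‖w − w̃‖ + ‖w̃ − z‖) − 6(L+d)²/(d²(d+1)) + d s − d²η/2, and P₂(w) = (1/(2η))·[(‖w − w̃‖ − δ₀)² + (‖z − w*‖ − 2δ₀)² − 32·(1 + L/d)²·η/(d+1)] − d²η/2 + d s. Then P₂(w) ≤ P₁(w) for every w ∈ ℝ^{d+1}. -/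

import Mathlib

/-- The Euclidean norm of a point of `ℝ^d × ℝ ≅ ℝ^{d+1}`. -/
noncomputable def enorm2 {d : ℕ} (p : EuclideanSpace ℝ (Fin d) × ℝ) : ℝ :=
  Real.sqrt (‖p.1‖ ^ 2 + p.2 ^ 2)

/-!
With `A = ‖w - w̃‖`, `B = ‖w̃ - z‖`, `C = ‖z - w*‖` and `δ₀` as in the statement, the constants of
`P₁` are `δ₀ / η` and `3 δ₀² / η`, so that `2η (P₁ - P₂) = (B - δ₀)² + 8 δ₀² - (C - 2 δ₀)²`.
The triangle inequality through `w̃` gives `C ≤ B + δ₀`, hence `(C - 2δ₀)² ≤ (B - δ₀)² + 4 δ₀²`.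
-/

open Real

lemma enorm2_eq_norm_toLp {d : ℕ} (p : EuclideanSpace ℝ (Fin d) × ℝ) :
    enorm2 p = ‖WithLp.toLp 2 p‖ := by
  rw [enorm2, WithLp.prod_norm_eq_of_L2]
  simp

lemma enorm2_nonneg {d : ℕ} (p : EuclideanSpace ℝ (Fin d) × ℝ) : 0 ≤ enorm2 p :=
  sqrt_nonneg _

lemma enorm2_sub_le_sub_add_sub {d : ℕ} (x y z : EuclideanSpace ℝ (Fin d) × ℝ) :
    enorm2 (x - y) ≤ enorm2 (z - x) + enorm2 (z - y) := by
  simp only [enorm2_eq_norm_toLp, WithLp.toLp_sub, ← dist_eq_norm]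
  exact dist_triangle_left _ _ _

/-- The paper's `δ₀` under a general scaling `a` (the theorem takes `a = d`). -/
noncomputable def delta0 (a η L : ℝ) : ℝ :=
  (1 + L / a) * √(2 * η / (a + 1))

section delta0

variable {a η : ℝ} (L : ℝ) (ha : 0 < a) (hη : 0 < η)
include ha hη

lemma sq_delta0 : delta0 a η L ^ 2 = 2 * (1 + L / a) ^ 2 * η / (a + 1) := by
  rw [delta0, mul_pow, sq_sqrt (by positivity)]
  ring

lemma sqrt_two_mul_add_div_eq_delta0_div :
    √2 * (L + a) / (a * √(η * (a + 1))) = delta0 a η L / η := by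
  have ha1 : 0 < a + 1 := by linarith
  have : 0 < √η := sqrt_pos.2 hη
  have : 0 < √(a + 1) := sqrt_pos.2 ha1
  rw [delta0, sqrt_div' _ ha1.le, sqrt_mul' _ ha1.le, sqrt_mul zero_le_two]
  field_simp
  rw [sq_sqrt hη.le]
  ring

lemma six_mul_add_sq_div_eq_delta0 :
    6 * (L + a) ^ 2 / (a ^ 2 * (a + 1)) = 3 * delta0 a η L ^ 2 / η := by
  rw [sq_delta0 L ha hη]
  field_simp
  ring

lemma thirtytwo_mul_sq_div_eq_delta0 :
    32 * (1 + L / a) ^ 2 * η / (a + 1) = 16 * delta0 a η L ^ 2 := by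
  rw [sq_delta0 L ha hη]
  ring

end delta0

lemma sq_sub_two_mul_le {B C δ : ℝ} (hC : 0 ≤ C) (hCB : C ≤ B + δ) :
    (C - 2 * δ) ^ 2 ≤ (B - δ) ^ 2 + 4 * δ ^ 2 := by
  rcases le_or_gt (2 * δ) C with h | h
  · nlinarith
  · nlinarith

lemma potential_comparison {η δ A B C : ℝ} (hη : 0 < η) (hC : 0 ≤ C) (hCB : C ≤ B + δ) :
    1 / (2 * η) * ((A - δ) ^ 2 + (C - 2 * δ) ^ 2 - 16 * δ ^ 2)
      ≤ (A ^ 2 + B ^ 2) / (2 * η) - δ / η * (A + B) - 3 * δ ^ 2 / η := by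
  have hgap : (A ^ 2 + B ^ 2) / (2 * η) - δ / η * (A + B) - 3 * δ ^ 2 / η
      - 1 / (2 * η) * ((A - δ) ^ 2 + (C - 2 * δ) ^ 2 - 16 * δ ^ 2)
      = ((B - δ) ^ 2 + 8 * δ ^ 2 - (C - 2 * δ) ^ 2) / (2 * η) := by
    field_simp
    ring
  have := sq_sub_two_mul_le hC hCB
  rw [← sub_nonneg, hgap]
  apply div_nonneg <;> nlinarith

theorem stmt_13_general {d : ℕ} (hd : 1 ≤ d) (η L s : ℝ) (hη : 0 < η)
    (z : EuclideanSpace ℝ (Fin d) × ℝ)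
    (ws : EuclideanSpace ℝ (Fin d) × ℝ)
    (wt : EuclideanSpace ℝ (Fin d) × ℝ)
    (hwt : enorm2 (wt - ws) ≤ (1 + L / d) * Real.sqrt (2 * η / (d + 1))) :
    ∀ w : EuclideanSpace ℝ (Fin d) × ℝ,
      (1 / (2 * η)) *
          ((enorm2 (w - wt) - (1 + L / d) * Real.sqrt (2 * η / (d + 1))) ^ 2
            + (enorm2 (z - ws) - 2 * ((1 + L / d) * Real.sqrt (2 * η / (d + 1)))) ^ 2
            - 32 * (1 + L / d) ^ 2 * η / (d + 1))
          - d ^ 2 * η / 2 + d * s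
        ≤ (enorm2 (w - wt) ^ 2 + enorm2 (wt - z) ^ 2) / (2 * η)
          - (Real.sqrt 2 * (L + d) / (d * Real.sqrt (η * (d + 1))))
              * (enorm2 (w - wt) + enorm2 (wt - z))
          - 6 * (L + d) ^ 2 / (d ^ 2 * (d + 1))
          + d * s - d ^ 2 * η / 2 := by
  intro w
  have hd0 : (0 : ℝ) < d := by exact_mod_cast hd
  have hδ : (1 + L / d) * √(2 * η / (d + 1)) = delta0 d η L := rfl
  rw [hδ] at hwt ⊢
  rw [sqrt_two_mul_add_div_eq_delta0_div L hd0 hη, six_mul_add_sq_div_eq_delta0 L hd0 hη,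
    thirtytwo_mul_sq_div_eq_delta0 L hd0 hη]
  have hCB : enorm2 (z - ws) ≤ enorm2 (wt - z) + delta0 d η L :=
    (enorm2_sub_le_sub_add_sub z ws wt).trans (by linarith)
  have := potential_comparison (A := enorm2 (w - wt)) hη (enorm2_nonneg _) hCB
  linarith

/-- With the scaling `a = d`: if `w*` is the projection of `z` (with last coordinate `s - dη`)
onto the nonempty closed set `Q ⊆ ℝ^{d+1}` and `‖w̃ - w*‖ ≤ δ₀ := (1 + L/d)√(2η/(d+1))`, then
the auxiliary Gaussian-like potential `P₂` lower-bounds the proposal potential `P₁`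
everywhere. -/
theorem stmt_13 {d : ℕ} (hd : 1 ≤ d) (η L s : ℝ) (hη : 0 < η) (hL : 0 ≤ L)
    (Q : Set (EuclideanSpace ℝ (Fin d) × ℝ)) (hQne : Q.Nonempty) (hQcl : IsClosed Q)
    (z : EuclideanSpace ℝ (Fin d) × ℝ) (hz : z.2 = s - d * η)
    (ws : EuclideanSpace ℝ (Fin d) × ℝ) (hws : ws ∈ Q)
    (hproj : ∀ w ∈ Q, enorm2 (ws - z) ≤ enorm2 (w - z))
    (wt : EuclideanSpace ℝ (Fin d) × ℝ)
    (hwt : enorm2 (wt - ws) ≤ (1 + L / d) * Real.sqrt (2 * η / (d + 1))) :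
    ∀ w : EuclideanSpace ℝ (Fin d) × ℝ,
      (1 / (2 * η)) *
          ((enorm2 (w - wt) - (1 + L / d) * Real.sqrt (2 * η / (d + 1))) ^ 2
            + (enorm2 (z - ws) - 2 * ((1 + L / d) * Real.sqrt (2 * η / (d + 1)))) ^ 2
            - 32 * (1 + L / d) ^ 2 * η / (d + 1))
          - d ^ 2 * η / 2 + d * s
        ≤ (enorm2 (w - wt) ^ 2 + enorm2 (wt - z) ^ 2) / (2 * η)
          - (Real.sqrt 2 * (L + d) / (d * Real.sqrt (η * (d + 1))))
              * (enorm2 (w - wt) + enorm2 (wt - z))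
          - 6 * (L + d) ^ 2 / (d ^ 2 * (d + 1))
          + d * s - d ^ 2 * η / 2 :=
  stmt_13_general hd η L s hη z ws wt hwt
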